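/- arXiv:1710.09177 — 3 statements merged into one kernel-verified Lean document; each statement's English description precedes it below -/
import Mathlib

section
/- Suppose the input X ∈ ℝ^n is subject only to the nonnegativity constraint X_k ≥ 0 a.s. for all k and the average-power constraint ∑_{k=1}^n E[X_k] ≤ E for some E > 0 (no peak-power constraint). Then the capacity satisfies C_{h,σ²}(E) = sup over all laws of a scalar random variable X̄ with X̄ ≥ 0 a.s. and E[X̄] ≤ h_1·E of I(X̄; X̄ + Z), i.e., C_{h,σ²}(E) = C_{1,σ²}(h_1 E), the capacity of the unit-gain SISO channel under average-power constraint h_1 E. -/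
open MeasureTheory ProbabilityTheory Real Filter
open scoped NNReal ENNReal Classical

noncomputable section

/-- Kullback–Leibler divergence (Mathlib's `ProbabilityTheory.klDiv`). -/
def klDiv {α : Type*} [MeasurableSpace α] (μ ν : Measure α) : EReal :=
  if μ ≪ ν ∧ Integrable (llr μ ν) μ then ((∫ x, llr μ ν x ∂μ : ℝ) : EReal) else ⊤

/-- Mutual information of a joint law: KL divergence of the joint law from the
product of its marginals. -/
def mutualInfo {α β : Type*} [MeasurableSpace α] [MeasurableSpace β]
    (joint : Measure (α × β)) : EReal :=
  klDiv joint ((joint.map Prod.fst).prod (joint.map Prod.snd))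

/-- Partial sums `s_k = h_1 + ⋯ + h_k`. -/
def sCum {n : ℕ} (h : Fin n → ℝ) (k : ℕ) : ℝ :=
  ∑ i : Fin n, if i.val < k then h i else 0

/-- Joint law of `(X, Y)` with `Y = hᵀX + Z`, `Z ~ N(0, v)` independent of `X`. -/
def misoJoint {n : ℕ} (h : Fin n → ℝ) (v : ℝ≥0) (μ : Measure (Fin n → ℝ)) :
    Measure ((Fin n → ℝ) × ℝ) :=
  (μ.prod (gaussianReal 0 v)).map (fun p => (p.1, (∑ k, h k * p.1 k) + p.2))

/-- MISO capacity under peak-power constraint `A` and average-power constraint `E`. -/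
def misoCapacity {n : ℕ} (h : Fin n → ℝ) (v : ℝ≥0) (A E : ℝ) : EReal :=
  ⨆ μ ∈ {μ : Measure (Fin n → ℝ) | IsProbabilityMeasure μ ∧
      (∀ k, ∀ᵐ x ∂μ, x k ∈ Set.Icc 0 A) ∧ (∑ k, ∫ x, x k ∂μ) ≤ E},
    mutualInfo (misoJoint h v μ)

/-- MISO capacity under only an average-power constraint `E`. -/
def misoCapacityAvg {n : ℕ} (h : Fin n → ℝ) (v : ℝ≥0) (E : ℝ) : EReal :=
  ⨆ μ ∈ {μ : Measure (Fin n → ℝ) | IsProbabilityMeasure μ ∧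
      (∀ k, ∀ᵐ x ∂μ, 0 ≤ x k) ∧ (∑ k, ∫ x, x k ∂μ) ≤ E},
    mutualInfo (misoJoint h v μ)

/-- Joint law of `(X̄, X̄ + Z)` for the unit-gain SISO channel. -/
def sisoJoint (v : ℝ≥0) (μ : Measure ℝ) : Measure (ℝ × ℝ) :=
  (μ.prod (gaussianReal 0 v)).map (fun p => (p.1, p.1 + p.2))

/-- Unit-gain SISO capacity under peak-power constraint `A` and average-power
constraint `E`. -/
def sisoCapacity (v : ℝ≥0) (A E : ℝ) : EReal :=
  ⨆ μ ∈ {μ : Measure ℝ | IsProbabilityMeasure μ ∧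
      (∀ᵐ x ∂μ, x ∈ Set.Icc 0 A) ∧ (∫ x, x ∂μ) ≤ E},
    mutualInfo (sisoJoint v μ)

/-- Unit-gain SISO capacity under only an average-power constraint `E`. -/
def sisoCapacityAvg (v : ℝ≥0) (E : ℝ) : EReal :=
  ⨆ μ ∈ {μ : Measure ℝ | IsProbabilityMeasure μ ∧
      (∀ᵐ x ∂μ, 0 ≤ x) ∧ (∫ x, x ∂μ) ≤ E},
    mutualInfo (sisoJoint v μ)

/-- The interval `(s_{k-1} A, s_k A]` (with the first one being `[0, s_1 A]`)
corresponding to the event `U = k` (0-indexed: `k ∈ Fin n` stands for `k+1`). -/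
def uInterval {n : ℕ} (h : Fin n → ℝ) (A : ℝ) (k : Fin n) : Set ℝ :=
  if k.val = 0 then Set.Icc 0 (sCum h 1 * A)
  else Set.Ioc (sCum h k.val * A) (sCum h (k.val + 1) * A)

/-- The average input power `∑_k p_k ((E[X̄ | U=k] - A s_{k-1})/h_k + (k-1) A)`
consumed to generate a scalar law of `X̄`. -/
def avgPowerUse {n : ℕ} (h : Fin n → ℝ) (A : ℝ) (μ : Measure ℝ) : ℝ :=
  ∑ k : Fin n,
    (((∫ x in uInterval h A k, x ∂μ) - A * sCum h k.val * (μ (uInterval h A k)).toReal) / h k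
      + (k.val : ℝ) * A * (μ (uInterval h A k)).toReal)

/-- The threshold `α_th`. -/
def alphaTh {n : ℕ} (h : Fin n → ℝ) : ℝ :=
  1 / 2 + (1 / sCum h n) * ∑ k : Fin n, h k * (k.val : ℝ)


end

/-! The output `Y = h ⬝ᵥ X + Z` sees `X` only through the scalar `h ⬝ᵥ X`: the density
`φ(y - h ⬝ᵥ x) / q(y)` of the joint law of `(X, Y)` with respect to the product of its marginals
factors through `(h ⬝ᵥ x, y)`, so `I(X; Y) = I(h ⬝ᵥ X; h ⬝ᵥ X + Z)`. An admissible MISO input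
thus yields the SISO input `h ⬝ᵥ X ≥ 0` of mean at most `h₁ ∑ E[X_k] ≤ h₁ E`; conversely a SISO
input `X̄` of mean at most `h₁ E` is realised by driving only the strongest LED, with `X̄ / h₁`. -/

section Sufficiency

variable {α β : Type*} [MeasurableSpace α] [MeasurableSpace β]

lemma map_withDensity_comp {g : α → β} (hg : Measurable g) {f : β → ℝ≥0∞} (hf : Measurable f)
    (ν : Measure α) : (ν.withDensity (f ∘ g)).map g = (ν.map g).withDensity f := by
  ext s hs
  rw [Measure.map_apply hg hs, withDensity_apply _ (hg hs), withDensity_apply _ hs,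
    setLIntegral_map hs hf hg]
  rfl

lemma klDiv_withDensity_self (ν : Measure α) [SigmaFinite ν] {F : α → ℝ≥0∞}
    (hF : Measurable F) :
    klDiv (ν.withDensity F) ν =
      if Integrable (fun x => log (F x).toReal) (ν.withDensity F)
      then ((∫ x, log (F x).toReal ∂ν.withDensity F : ℝ) : EReal) else ⊤ := by
  have hllr : llr (ν.withDensity F) ν =ᵐ[ν.withDensity F] fun x => log (F x).toReal := by
    filter_upwards [withDensity_absolutelyContinuous ν F |>.ae_le
      (Measure.rnDeriv_withDensity ν hF)] with x hx
    simp only [llr_def, hx]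
  rw [klDiv, integrable_congr hllr, integral_congr_ae hllr]
  simp only [withDensity_absolutelyContinuous, true_and]

lemma klDiv_withDensity_comp {g : α → β} (hg : Measurable g) {f : β → ℝ≥0∞}
    (hf : Measurable f) (ν : Measure α) [SigmaFinite ν] [SigmaFinite (ν.map g)] :
    klDiv (ν.withDensity (f ∘ g)) ν = klDiv ((ν.map g).withDensity f) (ν.map g) := by
  have hlog : StronglyMeasurable fun y => log (f y).toReal := by fun_prop
  rw [klDiv_withDensity_self ν (hf.comp hg), klDiv_withDensity_self _ hf,
    ← map_withDensity_comp hg hf, integrable_map_measure hlog.aestronglyMeasurable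
    hg.aemeasurable, integral_map hg.aemeasurable hlog.aestronglyMeasurable]
  rfl

lemma map_snd_withDensity_prod (μ : Measure α) [SFinite μ] (ν : Measure β) [SFinite ν]
    {G : α × β → ℝ≥0∞} (hG : Measurable G) :
    ((μ.prod ν).withDensity G).map Prod.snd = ν.withDensity fun y => ∫⁻ x, G (x, y) ∂μ := by
  ext B hB
  have hB' : MeasurableSet (Prod.snd ⁻¹' B : Set (α × β)) := measurable_snd hB
  rw [Measure.map_apply measurable_snd hB, withDensity_apply _ hB', withDensity_apply _ hB,
    ← lintegral_indicator hB', lintegral_prod_symm _ (hG.indicator hB').aemeasurable,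
    ← lintegral_indicator hB]
  refine lintegral_congr fun y => ?_
  by_cases hy : y ∈ B <;> simp [Set.indicator, hy]

end Sufficiency

lemma gaussianPDF_le (μ : ℝ) (v : ℝ≥0) (x : ℝ) :
    gaussianPDF μ v x ≤ ENNReal.ofReal (√(2 * π * v))⁻¹ := by
  refine ENNReal.ofReal_le_ofReal ?_
  rw [gaussianPDFReal]
  refine mul_le_of_le_one_right (by positivity) (exp_le_one_iff.2 ?_)
  rw [neg_div]
  exact neg_nonpos.2 (by positivity)

noncomputable section AWGN

variable {α : Type*} [MeasurableSpace α]

def awgnJoint (v : ℝ≥0) (T : α → ℝ) (μ : Measure α) : Measure (α × ℝ) :=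
  (μ.prod (gaussianReal 0 v)).map (fun p => (p.1, T p.1 + p.2))

def awgnOutputPDF (v : ℝ≥0) (ρ : Measure ℝ) (y : ℝ) : ℝ≥0∞ :=
  ∫⁻ a, gaussianPDF 0 v (y - a) ∂ρ

@[fun_prop]
lemma measurable_awgnOutputPDF (v : ℝ≥0) (ρ : Measure ℝ) [SFinite ρ] :
    Measurable (awgnOutputPDF v ρ) :=
  Measurable.lintegral_prod_right
    ((measurable_gaussianPDF 0 v).comp (measurable_fst.sub measurable_snd))

lemma awgnOutputPDF_ne_zero {v : ℝ≥0} (hv : v ≠ 0) (ρ : Measure ℝ) [NeZero ρ] (y : ℝ) :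
    awgnOutputPDF v ρ y ≠ 0 := by
  rw [awgnOutputPDF, Ne, lintegral_eq_zero_iff (by fun_prop)]
  intro h
  obtain ⟨a, ha⟩ := h.exists
  exact (gaussianPDF_pos 0 hv (y - a)).ne' ha

lemma awgnOutputPDF_ne_top (v : ℝ≥0) (ρ : Measure ℝ) [IsFiniteMeasure ρ] (y : ℝ) :
    awgnOutputPDF v ρ y ≠ ⊤ :=
  ne_top_of_le_ne_top (ENNReal.mul_ne_top ENNReal.ofReal_ne_top (measure_ne_top ρ Set.univ))
    ((lintegral_mono fun a => gaussianPDF_le 0 v (y - a)).trans_eq (lintegral_const _))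

lemma awgnJoint_eq_withDensity {v : ℝ≥0} (hv : v ≠ 0) {T : α → ℝ} (hT : Measurable T)
    (μ : Measure α) [SFinite μ] :
    awgnJoint v T μ =
      (μ.prod volume).withDensity fun p => gaussianPDF 0 v (p.2 - T p.1) := by
  have hshear : MeasurePreserving (fun p : α × ℝ => (p.1, T p.1 + p.2))
      (μ.prod volume) (μ.prod volume) :=
    (MeasurePreserving.id μ).skew_product (by fun_prop)
      (ae_of_all _ fun x => (measurePreserving_add_left volume (T x)).map_eq)
  have hdens : (fun p : α × ℝ => gaussianPDF 0 v p.2) =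
      (fun p : α × ℝ => gaussianPDF 0 v (p.2 - T p.1)) ∘ fun p => (p.1, T p.1 + p.2) := by
    ext p
    simp
  rw [awgnJoint, gaussianReal_of_var_ne_zero _ hv,
    prod_withDensity_right (measurable_gaussianPDF 0 v), hdens,
    map_withDensity_comp hshear.measurable (by fun_prop), hshear.map_eq]

lemma awgnJoint_map_fst (v : ℝ≥0) {T : α → ℝ} (hT : Measurable T) (μ : Measure α) [SFinite μ] :
    (awgnJoint v T μ).map Prod.fst = μ := by
  rw [awgnJoint, Measure.map_map measurable_fst (by fun_prop)]
  simp [Function.comp_def, Measure.map_fst_prod]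

lemma awgnJoint_map_snd {v : ℝ≥0} (hv : v ≠ 0) {T : α → ℝ} (hT : Measurable T)
    (μ : Measure α) [SFinite μ] :
    (awgnJoint v T μ).map Prod.snd = volume.withDensity (awgnOutputPDF v (μ.map T)) := by
  rw [awgnJoint_eq_withDensity hv hT, map_snd_withDensity_prod _ _ (by fun_prop)]
  congr with y
  rw [awgnOutputPDF, lintegral_map (by fun_prop) hT]

lemma awgnJoint_map_prodMap (v : ℝ≥0) {T : α → ℝ} (hT : Measurable T) (μ : Measure α)
    [SFinite μ] : (awgnJoint v T μ).map (Prod.map T id) = awgnJoint v id (μ.map T) := by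
  have hprod := Measure.map_prod_map μ (gaussianReal 0 v) hT measurable_id
  rw [Measure.map_id] at hprod
  rw [awgnJoint, awgnJoint, Measure.map_map (by fun_prop) (by fun_prop), hprod,
    Measure.map_map (by fun_prop) (hT.prodMap measurable_id)]
  rfl

lemma isProbabilityMeasure_awgnJoint (v : ℝ≥0) {T : α → ℝ} (hT : Measurable T)
    (μ : Measure α) [IsProbabilityMeasure μ] : IsProbabilityMeasure (awgnJoint v T μ) :=
  Measure.isProbabilityMeasure_map (by fun_prop)

lemma awgnJoint_eq_withDensity_prod {v : ℝ≥0} (hv : v ≠ 0) {T : α → ℝ} (hT : Measurable T)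
    (μ : Measure α) [IsProbabilityMeasure μ] :
    awgnJoint v T μ = (μ.prod ((awgnJoint v T μ).map Prod.snd)).withDensity
      ((fun q => gaussianPDF 0 v (q.2 - q.1) / awgnOutputPDF v (μ.map T) q.2) ∘
        Prod.map T id) := by
  have : IsProbabilityMeasure (μ.map T) := Measure.isProbabilityMeasure_map hT.aemeasurable
  have hQ := measurable_awgnOutputPDF v (μ.map T)
  rw [awgnJoint_map_snd hv hT, prod_withDensity_right hQ, ← withDensity_mul _ (by fun_prop)
    (by fun_prop), awgnJoint_eq_withDensity hv hT]
  congr 1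
  ext p
  exact (ENNReal.mul_div_cancel (awgnOutputPDF_ne_zero hv _ p.2)
    (awgnOutputPDF_ne_top v _ p.2)).symm

theorem mutualInfo_awgnJoint {v : ℝ≥0} (hv : v ≠ 0) {T : α → ℝ} (hT : Measurable T)
    (μ : Measure α) [IsProbabilityMeasure μ] :
    mutualInfo (awgnJoint v T μ) = mutualInfo (awgnJoint v id (μ.map T)) := by
  have : IsProbabilityMeasure (μ.map T) := Measure.isProbabilityMeasure_map hT.aemeasurable
  have := isProbabilityMeasure_awgnJoint v hT μ
  set ν := (awgnJoint v T μ).map Prod.snd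
  have : IsProbabilityMeasure ν := Measure.isProbabilityMeasure_map measurable_snd.aemeasurable
  set g : ℝ × ℝ → ℝ≥0∞ := fun q => gaussianPDF 0 v (q.2 - q.1) / awgnOutputPDF v (μ.map T) q.2
  have hν : (awgnJoint v id (μ.map T)).map Prod.snd = ν := by
    rw [← awgnJoint_map_prodMap v hT, Measure.map_map measurable_snd (by fun_prop)]
    rfl
  have hprod : (μ.prod ν).map (Prod.map T id) = (μ.map T).prod ν := by
    rw [← Measure.map_prod_map _ _ hT measurable_id, Measure.map_id]
  have hid := awgnJoint_eq_withDensity_prod hv measurable_id (μ.map T)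
  rw [Measure.map_id, hν, Prod.map_id, Function.comp_id] at hid
  calc mutualInfo (awgnJoint v T μ) = klDiv (awgnJoint v T μ) (μ.prod ν) := by
        rw [mutualInfo, awgnJoint_map_fst v hT]
    _ = klDiv ((μ.prod ν).withDensity (g ∘ Prod.map T id)) (μ.prod ν) :=
        congrArg (klDiv · _) (awgnJoint_eq_withDensity_prod hv hT μ)
    _ = klDiv (((μ.map T).prod ν).withDensity g) ((μ.map T).prod ν) := by
        rw [klDiv_withDensity_comp (by fun_prop) (by simp only [g]; fun_prop), hprod]
    _ = mutualInfo (awgnJoint v id (μ.map T)) := by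
        rw [mutualInfo, awgnJoint_map_fst v measurable_id, hν, ← hid]

end AWGN

lemma mutualInfo_misoJoint {n : ℕ} (h : Fin n → ℝ) {v : ℝ≥0} (hv : v ≠ 0)
    (μ : Measure (Fin n → ℝ)) [IsProbabilityMeasure μ] :
    mutualInfo (misoJoint h v μ) = mutualInfo (sisoJoint v (μ.map (h ⬝ᵥ ·))) :=
  mutualInfo_awgnJoint (T := (h ⬝ᵥ ·)) hv (by fun_prop) μ

@[fun_prop]
lemma measurable_pi_single {ι β : Type*} [DecidableEq ι] [MeasurableSpace β] [Zero β] (k : ι) :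
    Measurable (fun b : β => (Pi.single k b : ι → β)) :=
  measurable_update 0

section InputPower

variable {ι : Type*} [Fintype ι] {μ : Measure (ι → ℝ)} {h : ι → ℝ}

lemma integrable_apply_of_integrable_dotProduct (hpos : ∀ k, 0 < h k)
    (hnn : ∀ k, ∀ᵐ x ∂μ, 0 ≤ x k) (hint : Integrable (h ⬝ᵥ ·) μ) (k : ι) :
    Integrable (fun x => x k) μ := by
  refine (hint.const_mul (h k)⁻¹).mono' (measurable_pi_apply k).aestronglyMeasurable ?_
  filter_upwards [ae_all_iff.2 hnn] with x hx
  rw [norm_of_nonneg (hx k), inv_mul_eq_div, le_div_iff₀ (hpos k), mul_comm]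
  exact Finset.single_le_sum (f := fun j => h j * x j)
    (fun j _ => mul_nonneg (hpos j).le (hx j)) (Finset.mem_univ k)

lemma integral_dotProduct_le {c : ℝ} (hpos : ∀ k, 0 < h k) (hc : ∀ k, h k ≤ c)
    (hnn : ∀ k, ∀ᵐ x ∂μ, 0 ≤ x k) :
    ∫ x, h ⬝ᵥ x ∂μ ≤ c * ∑ k, ∫ x, x k ∂μ := by
  have hmean : ∀ k, 0 ≤ ∫ x, x k ∂μ := fun k => integral_nonneg_of_ae (hnn k)
  rw [Finset.mul_sum]
  by_cases hint : Integrable (h ⬝ᵥ ·) μ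
  · have hcoord := integrable_apply_of_integrable_dotProduct hpos hnn hint
    calc ∫ x, h ⬝ᵥ x ∂μ = ∑ k, h k * ∫ x, x k ∂μ := by
          simp only [dotProduct]
          rw [integral_finsetSum _ fun k _ => (hcoord k).const_mul _]
          simp only [integral_const_mul]
      _ ≤ ∑ k, c * ∫ x, x k ∂μ :=
          Finset.sum_le_sum fun k _ => mul_le_mul_of_nonneg_right (hc k) (hmean k)
  · rw [integral_undef hint]
    exact Finset.sum_nonneg fun k _ => mul_nonneg ((hpos k).le.trans (hc k)) (hmean k)

lemma sum_integral_apply_map_single [DecidableEq ι] (ρ : Measure ℝ) (k₀ : ι) (c : ℝ) :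
    ∑ k, ∫ x, x k ∂(ρ.map fun a => (Pi.single k₀ (a / c) : ι → ℝ)) = (∫ a, a ∂ρ) / c := by
  have hcoord (k : ι) :
      ∫ x, x k ∂(ρ.map fun a => (Pi.single k₀ (a / c) : ι → ℝ)) =
        (Pi.single k₀ ((∫ a, a ∂ρ) / c) : ι → ℝ) k := by
    rw [integral_map (φ := fun a => (Pi.single k₀ (a / c) : ι → ℝ)) (by fun_prop)
      (measurable_pi_apply k).aestronglyMeasurable]
    by_cases hk : k = k₀
    · subst hk
      simp [integral_div]
    · simp [hk]
  simp [hcoord]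

end InputPower

lemma misoCapacityAvg_le_sisoCapacityAvg {n : ℕ} {h : Fin n → ℝ} {v : ℝ≥0} (hv : v ≠ 0)
    (hpos : ∀ k, 0 < h k) {k₀ : Fin n} (hmax : ∀ k, h k ≤ h k₀) (E : ℝ) :
    misoCapacityAvg h v E ≤ sisoCapacityAvg v (h k₀ * E) := by
  refine iSup₂_le fun μ ⟨hμ, hnn, hE⟩ => ?_
  have hT : Measurable (h ⬝ᵥ · : (Fin n → ℝ) → ℝ) := by fun_prop
  rw [mutualInfo_misoJoint h hv μ]
  refine le_iSup₂_of_le (μ.map (h ⬝ᵥ ·))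
    ⟨Measure.isProbabilityMeasure_map hT.aemeasurable, ?_, ?_⟩ le_rfl
  · rw [ae_map_iff hT.aemeasurable measurableSet_Ici]
    filter_upwards [ae_all_iff.2 hnn] with x hx
    exact Finset.sum_nonneg fun k _ => mul_nonneg (hpos k).le (hx k)
  · calc ∫ a, a ∂(μ.map (h ⬝ᵥ ·)) = ∫ x, h ⬝ᵥ x ∂μ :=
          integral_map hT.aemeasurable aestronglyMeasurable_id
      _ ≤ h k₀ * ∑ k, ∫ x, x k ∂μ := integral_dotProduct_le hpos hmax hnn
      _ ≤ h k₀ * E := mul_le_mul_of_nonneg_left hE (hpos k₀).le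

lemma sisoCapacityAvg_le_misoCapacityAvg {n : ℕ} (h : Fin n → ℝ) {v : ℝ≥0} (hv : v ≠ 0)
    {k₀ : Fin n} (hk₀ : 0 < h k₀) (E : ℝ) :
    sisoCapacityAvg v (h k₀ * E) ≤ misoCapacityAvg h v E := by
  refine iSup₂_le fun ρ ⟨hρ, hnn, hE⟩ => ?_
  set e : ℝ → Fin n → ℝ := fun a => Pi.single k₀ (a / h k₀)
  have he : Measurable e := by fun_prop
  have := Measure.isProbabilityMeasure_map he.aemeasurable (μ := ρ)
  have hmi := mutualInfo_misoJoint h hv (ρ.map e)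
  rw [Measure.map_map (by fun_prop) he] at hmi
  have hcomp : (h ⬝ᵥ ·) ∘ e = id := by
    ext a
    simp [e, dotProduct_single, mul_div_cancel₀ _ hk₀.ne']
  rw [hcomp, Measure.map_id] at hmi
  rw [← hmi]
  refine le_iSup₂_of_le (ρ.map e) ⟨inferInstance, fun k => ?_, ?_⟩ le_rfl
  · rw [ae_map_iff he.aemeasurable (measurableSet_le measurable_const (measurable_pi_apply k))]
    filter_upwards [hnn] with a ha
    exact (Pi.single_nonneg.2 (div_nonneg ha hk₀.le) : (0 : Fin n → ℝ) ≤ e a) k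
  · rw [sum_integral_apply_map_single, div_le_iff₀' hk₀]
    exact hE

theorem miso_capacity_avg_only (n : ℕ) (hn : 2 ≤ n) (h : Fin n → ℝ)
    (hord : ∀ i j : Fin n, i ≤ j → h j ≤ h i) (hpos : ∀ k, 0 < h k)
    (v : ℝ≥0) (hv : 0 < v)
    (E : ℝ) :
    misoCapacityAvg h v E = sisoCapacityAvg v (h ⟨0, by omega⟩ * E) :=
  le_antisymm
    (misoCapacityAvg_le_sisoCapacityAvg hv.ne' hpos (fun k => hord _ k (Nat.zero_le _)) E)
    (sisoCapacityAvg_le_misoCapacityAvg h hv.ne' (hpos _) E)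
end

section
/- The maximum variance V_max(A, αA) is achieved by a law of X̄ supported on the finite set {0, s_1 A, s_2 A, …, s_n A}; that is, the supremum of Var(X̄) over all admissible laws equals the supremum over admissible laws supported on {0, s_1 A, …, s_n A}. -/
open MeasureTheory ProbabilityTheory Real Filter
open scoped NNReal ENNReal Classical

noncomputable section

/-- A scalar law is admissible if it is a probability measure, is supported on
nonnegative reals, puts no mass above `s_n A`, and respects the average-power
constraint `αA`. -/
def scalarAdmissible {n : ℕ} (h : Fin n → ℝ) (A αA : ℝ) (μ : Measure ℝ) : Prop :=
  IsProbabilityMeasure μ ∧ (∀ᵐ x ∂μ, 0 ≤ x) ∧ μ {x | sCum h n * A < x} = 0 ∧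
    avgPowerUse h A μ ≤ αA

/-- The maximum variance `V_max(A, αA)`. -/
def Vmax {n : ℕ} (h : Fin n → ℝ) (A αA : ℝ) : ℝ :=
  sSup ((fun μ : Measure ℝ => variance id μ) '' {μ | scalarAdmissible h A αA μ})

end



/-!
Split the mass that an admissible law puts on each cell `(s_{k-1} A, s_k A]` between the two
endpoints of the cell, keeping the cell's mass and mean. The power use is the integral of a
continuous function that is affine on each cell, so it does not change; neither does the mean;
and since `x ^ 2` lies below its chords, the second moment can only grow. So every admissible
variance is dominated by the variance of an admissible law on the grid `{0, s_1 A, …, s_n A}`.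
-/

section EndpointSplit

variable {μ : Measure ℝ} {I : Set ℝ} {a b : ℝ}

noncomputable def upperWeight (μ : Measure ℝ) (I : Set ℝ) (a b : ℝ) : ℝ :=
  (∫ x in I, (x - a) ∂μ) / (b - a)

/-- The two-point law on `{a, b}` with the same mass and mean as `μ` restricted to `I ⊆ [a, b]`:
the sweeping of `μ|_I` onto the endpoints of `[a, b]`. -/
noncomputable def endpointSplit (μ : Measure ℝ) (I : Set ℝ) (a b : ℝ) : Measure ℝ :=
  ENNReal.ofReal (upperWeight μ I a b) • Measure.dirac b
    + ENNReal.ofReal (μ.real I - upperWeight μ I a b) • Measure.dirac a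

lemma integrable_endpointSplit (f : ℝ → ℝ) : Integrable f (endpointSplit μ I a b) :=
  ((integrable_dirac enorm_lt_top).smul_measure ENNReal.ofReal_ne_top).add_measure
    ((integrable_dirac enorm_lt_top).smul_measure ENNReal.ofReal_ne_top)

lemma ae_endpointSplit {S : Set ℝ} (ha : a ∈ S) (hb : b ∈ S) :
    ∀ᵐ x ∂endpointSplit μ I a b, x ∈ S := by
  rw [endpointSplit, ae_add_measure_iff]
  exact ⟨Measure.ae_smul_measure (by simpa [ae_dirac_eq] using hb) _,
    Measure.ae_smul_measure (by simpa [ae_dirac_eq] using ha) _⟩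

lemma upperWeight_nonneg (hI_meas : MeasurableSet I) (hI : I ⊆ Set.Icc a b) (hab : a < b) :
    0 ≤ upperWeight μ I a b :=
  div_nonneg (setIntegral_nonneg hI_meas fun _ hx => sub_nonneg.mpr (hI hx).1) (sub_pos.mpr hab).le

variable [IsFiniteMeasure μ]

lemma integrableOn_of_subset_Icc (hI : I ⊆ Set.Icc a b) {f : ℝ → ℝ} (hf : Continuous f) :
    IntegrableOn f I μ :=
  hf.integrableOn_Icc.mono_set hI

lemma upperWeight_le_measureReal (hI_meas : MeasurableSet I) (hI : I ⊆ Set.Icc a b)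
    (hab : a < b) : upperWeight μ I a b ≤ μ.real I := by
  have hle : ∫ x in I, (x - a) ∂μ ≤ ∫ _ in I, (b - a) ∂μ :=
    setIntegral_mono_on (integrableOn_of_subset_Icc hI (by fun_prop))
      (integrableOn_const (measure_ne_top μ _)) hI_meas fun x hx => by linarith [(hI hx).2]
  rw [setIntegral_const, smul_eq_mul] at hle
  rw [upperWeight, div_le_iff₀ (sub_pos.mpr hab)]
  linarith

lemma integral_endpointSplit (hI_meas : MeasurableSet I) (hI : I ⊆ Set.Icc a b) (hab : a < b)
    (f : ℝ → ℝ) : ∫ x, f x ∂endpointSplit μ I a b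
      = upperWeight μ I a b * f b + (μ.real I - upperWeight μ I a b) * f a := by
  have hc := upperWeight_nonneg (μ := μ) hI_meas hI hab
  have hd := sub_nonneg.mpr (upperWeight_le_measureReal (μ := μ) hI_meas hI hab)
  rw [endpointSplit, integral_add_measure, integral_smul_measure, integral_smul_measure,
    integral_dirac, integral_dirac, ENNReal.toReal_ofReal hc, ENNReal.toReal_ofReal hd,
    smul_eq_mul, smul_eq_mul]
  all_goals exact (integrable_dirac enorm_lt_top).smul_measure ENNReal.ofReal_ne_top

lemma endpointSplit_univ (hI_meas : MeasurableSet I) (hI : I ⊆ Set.Icc a b) (hab : a < b) :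
    endpointSplit μ I a b Set.univ = μ I := by
  have hc := upperWeight_nonneg (μ := μ) hI_meas hI hab
  have hd := sub_nonneg.mpr (upperWeight_le_measureReal (μ := μ) hI_meas hI hab)
  simp only [endpointSplit, Measure.add_apply, Measure.smul_apply, measure_univ, smul_eq_mul,
    mul_one]
  rw [← ENNReal.ofReal_add hc hd, add_sub_cancel, ofReal_measureReal]

lemma setIntegral_affine_eq_integral_endpointSplit (hI_meas : MeasurableSet I)
    (hI : I ⊆ Set.Icc a b) (hab : a < b) (u v : ℝ) :
    ∫ x in I, (u * x + v) ∂μ = ∫ x, (u * x + v) ∂endpointSplit μ I a b := by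
  have hx : IntegrableOn (fun x => x) I μ := integrableOn_of_subset_Icc hI continuous_id
  have hc : upperWeight μ I a b * (b - a) = (∫ x in I, x ∂μ) - a * μ.real I := by
    rw [upperWeight, div_mul_cancel₀ _ (sub_pos.mpr hab).ne', integral_sub hx
      (integrableOn_const (measure_ne_top μ _)), setIntegral_const, smul_eq_mul, mul_comm]
  rw [integral_endpointSplit hI_meas hI hab, integral_add (hx.const_mul u)
    (integrableOn_const (measure_ne_top μ _)), integral_const_mul, setIntegral_const, smul_eq_mul]
  linear_combination (-u) * hc

lemma setIntegral_sq_le_integral_endpointSplit (hI_meas : MeasurableSet I)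
    (hI : I ⊆ Set.Icc a b) (hab : a < b) :
    ∫ x in I, x ^ 2 ∂μ ≤ ∫ x, x ^ 2 ∂endpointSplit μ I a b := by
  -- on `[a, b]` the parabola lies below its chord `x ↦ (a + b) x - a b`
  have hchord : ∫ x in I, x ^ 2 ∂μ ≤ ∫ x in I, ((a + b) * x + -(a * b)) ∂μ :=
    setIntegral_mono_on (integrableOn_of_subset_Icc hI (by fun_prop))
      (integrableOn_of_subset_Icc hI (by fun_prop)) hI_meas fun x hx => by
        nlinarith [(hI hx).1, (hI hx).2]
  rw [setIntegral_affine_eq_integral_endpointSplit hI_meas hI hab,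
    integral_endpointSplit hI_meas hI hab] at hchord
  rw [integral_endpointSplit hI_meas hI hab]
  linarith

end EndpointSplit

section Grid

variable {n : ℕ} {h : Fin n → ℝ} {A : ℝ}

lemma sCum_zero (h : Fin n → ℝ) : sCum h 0 = 0 := by simp [sCum]

lemma sCum_succ (h : Fin n → ℝ) {k : ℕ} (hk : k < n) :
    sCum h (k + 1) = sCum h k + h ⟨k, hk⟩ := by
  have hsplit : ∀ i : Fin n, (if i.val < k + 1 then h i else 0)
      = (if i.val < k then h i else 0) + (if ⟨k, hk⟩ = i then h i else 0) := by
    intro i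
    split_ifs <;> simp_all [Fin.ext_iff] <;> omega
  simp only [sCum, hsplit, Finset.sum_add_distrib, Finset.sum_ite_eq, Finset.mem_univ, if_true]

lemma sCum_mono (hpos : ∀ k, 0 < h k) : Monotone (sCum h) := fun a b hab =>
  Finset.sum_le_sum fun i _ => by
    split_ifs <;> first | exact le_rfl | exact (hpos i).le | omega

lemma sCum_nonneg (hpos : ∀ k, 0 < h k) (k : ℕ) : 0 ≤ sCum h k :=
  sCum_zero h ▸ sCum_mono hpos k.zero_le

lemma sCum_lt_sCum (hpos : ∀ k, 0 < h k) {i j : ℕ} (hij : i < j) (hj : j ≤ n) :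
    sCum h i < sCum h j :=
  calc sCum h i < sCum h (i + 1) := by
        rw [sCum_succ h (by omega)]; linarith [hpos ⟨i, by omega⟩]
    _ ≤ sCum h j := sCum_mono hpos hij

lemma sCum_mul_mem_Icc (hpos : ∀ k, 0 < h k) (hA : 0 ≤ A) {i : ℕ} (hi : i ≤ n) :
    sCum h i * A ∈ Set.Icc 0 (sCum h n * A) :=
  ⟨mul_nonneg (sCum_nonneg hpos i) hA, mul_le_mul_of_nonneg_right (sCum_mono hpos hi) hA⟩

lemma measurableSet_uInterval (j : Fin n) : MeasurableSet (uInterval h A j) := by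
  unfold uInterval; split_ifs
  exacts [measurableSet_Icc, measurableSet_Ioc]

lemma uInterval_subset_Icc (j : Fin n) :
    uInterval h A j ⊆ Set.Icc (sCum h j * A) (sCum h (j + 1) * A) := by
  unfold uInterval
  split_ifs with hj
  · rw [hj, sCum_zero, zero_mul]
  · exact Set.Ioc_subset_Icc_self

lemma pairwise_disjoint_uInterval (hpos : ∀ k, 0 < h k) (hA : 0 ≤ A) :
    Pairwise (Function.onFun Disjoint (uInterval h A)) := by
  have hlt : ∀ j j' : Fin n, j < j' → Disjoint (uInterval h A j) (uInterval h A j') := by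
    intro j j' hjj'
    have hj' : uInterval h A j' = Set.Ioc (sCum h j' * A) (sCum h (j' + 1) * A) :=
      if_neg (by omega)
    rw [hj', Set.disjoint_left]
    intro x hx hx'
    have hle : sCum h (j + 1) * A ≤ sCum h j' * A :=
      mul_le_mul_of_nonneg_right (sCum_mono hpos (by omega : j.val + 1 ≤ j')) hA
    linarith [(uInterval_subset_Icc j hx).2, hx'.1]
  intro j j' hne
  rcases lt_or_gt_of_ne hne with hjj' | hjj'
  exacts [hlt _ _ hjj', (hlt _ _ hjj').symm]

lemma Icc_subset_iUnion_uInterval (hpos : ∀ k, 0 < h k) (hA : 0 ≤ A) (hn : 0 < n) :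
    Set.Icc 0 (sCum h n * A) ⊆ ⋃ j, uInterval h A j := by
  rintro x ⟨hx0, hxn⟩
  suffices ∀ i ≤ n, x ≤ sCum h i * A → x ∈ ⋃ j, uInterval h A j from this n le_rfl hxn
  intro i
  induction i with
  | zero =>
    intro _ hx
    refine Set.mem_iUnion.mpr ⟨⟨0, hn⟩, ?_⟩
    rw [sCum_zero, zero_mul] at hx
    rw [uInterval, if_pos rfl, le_antisymm hx hx0]
    exact ⟨le_rfl, mul_nonneg (sCum_nonneg hpos 1) hA⟩
  | succ i ih =>
    intro hin hx
    by_cases hxi : x ≤ sCum h i * A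
    · exact ih (by omega) hxi
    refine Set.mem_iUnion.mpr ⟨⟨i, by omega⟩, ?_⟩
    unfold uInterval
    split_ifs with hi
    · obtain rfl : i = 0 := hi
      exact ⟨hx0, hx⟩
    · exact ⟨not_le.mp hxi, hx⟩

lemma sCum_mul_mem_uInterval (hpos : ∀ k, 0 < h k) (hA : 0 < A) (hn : 0 < n) {i : ℕ}
    (hi : i ≤ n) : sCum h i * A ∈ uInterval h A ⟨i - 1, by omega⟩ := by
  unfold uInterval
  split_ifs with hi1
  · exact ⟨mul_nonneg (sCum_nonneg hpos i) hA.le,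
      mul_le_mul_of_nonneg_right (sCum_mono hpos (by simp at hi1; omega)) hA.le⟩
  · have hi' : i - 1 + 1 = i := by simp at hi1; omega
    simp only [hi']
    exact ⟨mul_lt_mul_of_pos_right (sCum_lt_sCum hpos (by omega) hi) hA, le_rfl⟩

lemma ae_mem_iUnion_uInterval {μ : Measure ℝ} (hpos : ∀ k, 0 < h k) (hA : 0 ≤ A) (hn : 0 < n)
    (hμ : ∀ᵐ x ∂μ, x ∈ Set.Icc 0 (sCum h n * A)) :
    ∀ᵐ x ∂μ, x ∈ ⋃ j, uInterval h A j :=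
  hμ.mono fun _ hx => Icc_subset_iUnion_uInterval hpos hA hn hx

end Grid

section PowerCost

variable {n : ℕ} {h : Fin n → ℝ} {A : ℝ}

/-- The power needed to produce the value `x` of `X̄` in cell `j`. -/
noncomputable def costRate (h : Fin n → ℝ) (A : ℝ) (j : Fin n) (x : ℝ) : ℝ :=
  (x - A * sCum h j) / h j + j * A

noncomputable def powerCost (h : Fin n → ℝ) (A : ℝ) (x : ℝ) : ℝ :=
  ∑ j, (uInterval h A j).indicator (costRate h A j) x

lemma integrableOn_costRate {μ : Measure ℝ} [IsFiniteMeasure μ] (j : Fin n) :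
    IntegrableOn (costRate h A j) (uInterval h A j) μ :=
  integrableOn_of_subset_Icc (uInterval_subset_Icc j) (by unfold costRate; fun_prop)

lemma avgPowerUse_eq_sum_setIntegral_costRate (μ : Measure ℝ) [IsFiniteMeasure μ] :
    avgPowerUse h A μ = ∑ j, ∫ x in uInterval h A j, costRate h A j x ∂μ := by
  refine Finset.sum_congr rfl fun j _ => ?_
  have hx : IntegrableOn (fun x => x) (uInterval h A j) μ :=
    integrableOn_of_subset_Icc (uInterval_subset_Icc j) continuous_id
  have hconst : ∀ c : ℝ, IntegrableOn (fun _ => c) (uInterval h A j) μ :=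
    fun c => integrableOn_const (measure_ne_top μ _)
  simp only [costRate]
  rw [integral_add (f := fun x => (x - A * sCum h j) / h j)
      ((hx.sub (hconst _)).div_const _) (hconst _),
    integral_div, integral_sub hx (hconst _), setIntegral_const, setIntegral_const, smul_eq_mul,
    smul_eq_mul, measureReal_def]
  ring

lemma avgPowerUse_eq_integral_powerCost (μ : Measure ℝ) [IsFiniteMeasure μ] :
    avgPowerUse h A μ = ∫ x, powerCost h A x ∂μ := by
  unfold powerCost
  rw [avgPowerUse_eq_sum_setIntegral_costRate, integral_finsetSum _ fun j _ =>
    (integrableOn_costRate j).integrable_indicator (measurableSet_uInterval j)]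
  exact Finset.sum_congr rfl fun j _ => (integral_indicator (measurableSet_uInterval j)).symm

lemma costRate_sCum_mul (j : Fin n) : costRate h A j (sCum h j * A) = j * A := by
  simp [costRate, mul_comm]

lemma costRate_sCum_succ_mul (hpos : ∀ k, 0 < h k) (j : Fin n) :
    costRate h A j (sCum h (j + 1) * A) = (j + 1 : ℕ) * A := by
  rw [costRate, sCum_succ h j.isLt, Fin.eta, show (sCum h j + h j) * A - A * sCum h j = h j * A
    by ring, mul_div_cancel_left₀ _ (hpos j).ne']
  push_cast
  ring

/-- The affine pieces of `powerCost` on adjacent cells agree at their common endpoint. -/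
lemma powerCost_sCum_mul (hpos : ∀ k, 0 < h k) (hA : 0 < A) (hn : 0 < n) {i : ℕ}
    (hi : i ≤ n) : powerCost h A (sCum h i * A) = i * A := by
  have hmem := sCum_mul_mem_uInterval hpos hA hn hi
  rw [powerCost, Finset.sum_eq_single_of_mem _ (Finset.mem_univ _) fun j _ hj =>
    Set.indicator_of_notMem ((pairwise_disjoint_uInterval hpos hA.le hj).symm.notMem_of_mem_left
      hmem) _, Set.indicator_of_mem hmem]
  rcases Nat.eq_zero_or_pos i with rfl | hi0
  · simpa using costRate_sCum_mul (h := h) (A := A) ⟨0, hn⟩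
  · simpa only [Nat.sub_add_cancel hi0] using
      costRate_sCum_succ_mul (A := A) hpos ⟨i - 1, by omega⟩

end PowerCost

section GridSplit

variable {n : ℕ} {h : Fin n → ℝ} {A : ℝ} {μ : Measure ℝ}

noncomputable def gridSplit (h : Fin n → ℝ) (A : ℝ) (μ : Measure ℝ) : Measure ℝ :=
  ∑ k : Fin n, endpointSplit μ (uInterval h A k) (sCum h k * A) (sCum h (k + 1) * A)

lemma integral_gridSplit (f : ℝ → ℝ) :
    ∫ x, f x ∂gridSplit h A μ = ∑ k : Fin n,
      ∫ x, f x ∂endpointSplit μ (uInterval h A k) (sCum h k * A) (sCum h (k + 1) * A) :=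
  integral_finsetSum_measure fun _ _ => integrable_endpointSplit f

lemma ae_mem_range_gridSplit : ∀ᵐ x ∂gridSplit h A μ,
    x ∈ Set.range (fun k : Fin (n + 1) => sCum h k * A) := by
  rw [gridSplit, ← Measure.sum_fintype, Measure.ae_sum_iff]
  exact fun k => ae_endpointSplit ⟨⟨k, by omega⟩, rfl⟩ ⟨⟨k + 1, by omega⟩, rfl⟩

section

variable (hpos : ∀ k, 0 < h k) (hA : 0 < A)
include hpos hA

lemma sCum_mul_lt_sCum_succ_mul (k : Fin n) : sCum h k * A < sCum h (k + 1) * A :=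
  mul_lt_mul_of_pos_right (sCum_lt_sCum hpos k.val.lt_succ_self k.isLt) hA

variable (hn : 0 < n) (hμ : ∀ᵐ x ∂μ, x ∈ Set.Icc 0 (sCum h n * A))
include hn hμ

lemma sum_setIntegral_uInterval {f : ℝ → ℝ} (hf : Integrable f μ) :
    ∑ j, ∫ x in uInterval h A j, f x ∂μ = ∫ x, f x ∂μ := by
  rw [← integral_iUnion_fintype measurableSet_uInterval (pairwise_disjoint_uInterval hpos hA.le)
    fun _ => hf.integrableOn,
    Measure.restrict_eq_self_of_ae_mem (ae_mem_iUnion_uInterval hpos hA.le hn hμ)]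

variable [IsFiniteMeasure μ]

lemma gridSplit_univ : gridSplit h A μ Set.univ = μ Set.univ := by
  rw [gridSplit, Measure.finsetSum_apply, ← measure_congr (ae_eq_univ.mpr (ae_iff.mp
    (ae_mem_iUnion_uInterval hpos hA.le hn hμ))), measure_iUnion
    (pairwise_disjoint_uInterval hpos hA.le) measurableSet_uInterval, tsum_fintype]
  exact Finset.sum_congr rfl fun k _ => endpointSplit_univ (measurableSet_uInterval k)
    (uInterval_subset_Icc k) (sCum_mul_lt_sCum_succ_mul hpos hA k)

lemma integral_id_gridSplit : ∫ x, x ∂gridSplit h A μ = ∫ x, x ∂μ := by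
  rw [integral_gridSplit, ← sum_setIntegral_uInterval hpos hA hn hμ
    ((memLp_of_bounded hμ aestronglyMeasurable_id 1).integrable le_rfl)]
  refine Finset.sum_congr rfl fun k _ => ?_
  simpa using (setIntegral_affine_eq_integral_endpointSplit (measurableSet_uInterval k)
    (uInterval_subset_Icc k) (sCum_mul_lt_sCum_succ_mul hpos hA k) 1 0).symm

lemma integral_sq_le_integral_sq_gridSplit :
    ∫ x, x ^ 2 ∂μ ≤ ∫ x, x ^ 2 ∂gridSplit h A μ := by
  rw [integral_gridSplit, ← sum_setIntegral_uInterval hpos hA hn hμ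
    (memLp_of_bounded hμ aestronglyMeasurable_id 2).integrable_sq]
  exact Finset.sum_le_sum fun k _ => setIntegral_sq_le_integral_endpointSplit
    (measurableSet_uInterval k) (uInterval_subset_Icc k) (sCum_mul_lt_sCum_succ_mul hpos hA k)

lemma avgPowerUse_gridSplit : avgPowerUse h A (gridSplit h A μ) = avgPowerUse h A μ := by
  have : IsFiniteMeasure (gridSplit h A μ) :=
    ⟨by rw [gridSplit_univ hpos hA hn hμ]; exact measure_lt_top μ _⟩
  rw [avgPowerUse_eq_integral_powerCost, integral_gridSplit,
    avgPowerUse_eq_sum_setIntegral_costRate]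
  refine Finset.sum_congr rfl fun k _ => ?_
  have hk := sCum_mul_lt_sCum_succ_mul hpos hA k
  have haffine : costRate h A k = fun x => (h k)⁻¹ * x + (k * A - A * sCum h k / h k) := by
    funext x
    simp only [costRate]
    ring
  have hcell := setIntegral_affine_eq_integral_endpointSplit (μ := μ) (measurableSet_uInterval k)
    (uInterval_subset_Icc k) hk (h k)⁻¹ (k * A - A * sCum h k / h k)
  rw [← haffine] at hcell
  rw [hcell, integral_endpointSplit (measurableSet_uInterval k) (uInterval_subset_Icc k) hk,
    integral_endpointSplit (measurableSet_uInterval k) (uInterval_subset_Icc k) hk,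
    powerCost_sCum_mul hpos hA hn k.isLt, powerCost_sCum_mul hpos hA hn k.isLt.le,
    costRate_sCum_mul, costRate_sCum_succ_mul hpos]

end

end GridSplit

section Admissible

variable {n : ℕ} {h : Fin n → ℝ} {A αA : ℝ} {μ : Measure ℝ}

lemma scalarAdmissible.ae_mem_Icc (hμ : scalarAdmissible h A αA μ) :
    ∀ᵐ x ∂μ, x ∈ Set.Icc 0 (sCum h n * A) := by
  obtain ⟨-, hnonneg, htop, -⟩ := hμ
  have hle : ∀ᵐ x ∂μ, x ≤ sCum h n * A := by
    rw [ae_iff]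
    simpa only [not_le] using htop
  filter_upwards [hnonneg, hle] with x h0 h1 using ⟨h0, h1⟩

lemma scalarAdmissible_gridSplit (hpos : ∀ k, 0 < h k) (hA : 0 < A) (hn : 0 < n)
    (hμ : scalarAdmissible h A αA μ) : scalarAdmissible h A αA (gridSplit h A μ) := by
  have := hμ.1
  have hIcc : ∀ᵐ x ∂gridSplit h A μ, x ∈ Set.Icc 0 (sCum h n * A) :=
    ae_mem_range_gridSplit.mono fun _ ⟨i, hi⟩ => hi ▸ sCum_mul_mem_Icc hpos hA.le i.is_le
  refine ⟨⟨?_⟩, hIcc.mono fun _ hx => hx.1, ?_, ?_⟩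
  · rw [gridSplit_univ hpos hA hn hμ.ae_mem_Icc, measure_univ]
  · simpa only [not_not] using ae_iff.mp (hIcc.mono fun _ hx => not_lt.mpr hx.2)
  · rw [avgPowerUse_gridSplit hpos hA hn hμ.ae_mem_Icc]
    exact hμ.2.2.2

end Admissible

lemma variance_id_le_of_integral_eq_of_integral_sq_le {μ ν : Measure ℝ}
    [IsProbabilityMeasure μ] [IsProbabilityMeasure ν] (hμ : MemLp id 2 μ) (hν : MemLp id 2 ν)
    (hmean : ∫ x, x ∂μ = ∫ x, x ∂ν) (hsq : ∫ x, x ^ 2 ∂μ ≤ ∫ x, x ^ 2 ∂ν) :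
    variance id μ ≤ variance id ν := by
  rw [variance_eq_sub hμ, variance_eq_sub hν]
  simp only [id, Pi.pow_apply]
  rw [hmean]
  linarith

lemma exists_gridSupported_variance_le {n : ℕ} {h : Fin n → ℝ} {A αA : ℝ}
    {μ : Measure ℝ} (hpos : ∀ k, 0 < h k) (hA : 0 < A) (hn : 0 < n)
    (hμ : scalarAdmissible h A αA μ) :
    ∃ ν, (scalarAdmissible h A αA ν ∧
      ∀ᵐ x ∂ν, x ∈ Set.range (fun k : Fin (n + 1) => sCum h k * A)) ∧
      variance id μ ≤ variance id ν := by
  have hν := scalarAdmissible_gridSplit hpos hA hn hμ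
  have := hμ.1
  have := hν.1
  refine ⟨gridSplit h A μ, ⟨hν, ae_mem_range_gridSplit⟩, ?_⟩
  exact variance_id_le_of_integral_eq_of_integral_sq_le
    (memLp_of_bounded hμ.ae_mem_Icc aestronglyMeasurable_id 2)
    (memLp_of_bounded hν.ae_mem_Icc aestronglyMeasurable_id 2)
    (integral_id_gridSplit hpos hA hn hμ.ae_mem_Icc).symm
    (integral_sq_le_integral_sq_gridSplit hpos hA hn hμ.ae_mem_Icc)

theorem max_variance_achieved_on_finite_support_general (n : ℕ) (hn : 2 ≤ n) (h : Fin n → ℝ)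
    (hpos : ∀ k, 0 < h k)
    (A α : ℝ) (hA : 0 < A) :
    Vmax h A (α * A)
      = sSup ((fun μ : Measure ℝ => variance id μ) ''
          {μ | scalarAdmissible h A (α * A) μ ∧
            ∀ᵐ x ∂μ, x ∈ Set.range (fun k : Fin (n + 1) => sCum h k.val * A)}) := by
  refine csSup_eq_csSup_of_forall_exists_le ?_ ?_
  · rintro _ ⟨μ, hμ, rfl⟩
    obtain ⟨ν, hν, hle⟩ := exists_gridSupported_variance_le hpos hA (by omega) hμ
    exact ⟨_, ⟨ν, hν, rfl⟩, hle⟩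
  · rintro _ ⟨μ, hμ, rfl⟩
    exact ⟨_, ⟨μ, hμ.1, rfl⟩, le_rfl⟩

theorem max_variance_achieved_on_finite_support (n : ℕ) (hn : 2 ≤ n) (h : Fin n → ℝ)
    (hord : ∀ i j : Fin n, i ≤ j → h j ≤ h i) (hpos : ∀ k, 0 < h k)
    (A α : ℝ) (hA : 0 < A) (hα0 : 0 < α) (hαn : α < (n : ℝ) / 2) :
    Vmax h A (α * A)
      = sSup ((fun μ : Measure ℝ => variance id μ) ''
          {μ | scalarAdmissible h A (α * A) μ ∧
            ∀ᵐ x ∂μ, x ∈ Set.range (fun k : Fin (n + 1) => sCum h k.val * A)}) :=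
  max_variance_achieved_on_finite_support_general n hn h hpos A α hA
end

section
/- Let n ≥ 2 and let β be a real number with 0 < β < n/2. Then there exists a probability vector p = (p_1,…,p_n) (p_k ≥ 0, ∑_{k=1}^n p_k = 1) such that ∑_{k=1}^n p_k·(k−1) = β. Moreover, the map λ ↦ 1 − log( μ(λ)/(1 − e^{−μ(λ)}) ) − μ(λ)·e^{−μ(λ)}/(1 − e^{−μ(λ)}), where μ(λ) is the unique positive solution of 1/μ − e^{−μ}/(1 − e^{−μ}) = λ, is strictly increasing on (0, 1/2) and tends to 0 as λ → 1/2⁻. -/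
/-!
Write `λ(μ) = 1/μ - 1/(e^μ - 1)` and `H(μ)` (`truncExpMean`, `truncExpEntropy`) for the mean and
the differential entropy of the density on `[0, 1]` proportional to `e^{-μx}`, so that the map
of the theorem is `H ∘ μ` with `μ` the inverse of `λ`. Both derivatives are governed by the same
expression: `H'(μ) = μ λ'(μ)`, and `λ'(μ) < 0` amounts to `μ < 2 sinh (μ/2)`. Hence `λ` and `H`
are strictly decreasing on `(0, ∞)`, so `μ` is strictly decreasing and `H ∘ μ` strictly
increasing. Since `λ < 1/2` on `(0, ∞)` (this is `tanh (μ/2) < μ/2`), `μ(l) → 0⁺` as `l → 1/2⁻`,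
and `H(μ) = 1 + log ((e^μ - 1)/μ) - μ - μ/(e^μ - 1) → 0` there. The probability vector puts mass
`1 - β/(n-1)` on the first index and `β/(n-1)` on the last.
-/

open Real Filter Set Topology

noncomputable def truncExpMean (μ : ℝ) : ℝ :=
  1 / μ - exp (-μ) / (1 - exp (-μ))

noncomputable def truncExpEntropy (μ : ℝ) : ℝ :=
  1 - log (μ / (1 - exp (-μ))) - μ * exp (-μ) / (1 - exp (-μ))

lemma exp_sub_one_ne_zero {x : ℝ} (hx : x ≠ 0) : exp x - 1 ≠ 0 :=
  sub_ne_zero.2 (mt (exp_eq_one_iff x).1 hx)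

lemma exp_half_sq (x : ℝ) : exp (x / 2) ^ 2 = exp x := by
  rw [← exp_nat_mul]; ring_nf

lemma exp_neg_div_one_sub_exp_neg (μ : ℝ) : exp (-μ) / (1 - exp (-μ)) = (exp μ - 1)⁻¹ := by
  rw [exp_neg, ← inv_div, sub_div, div_self (inv_ne_zero (exp_pos μ).ne'), one_div, inv_inv]

lemma truncExpMean_eq : truncExpMean = fun μ => μ⁻¹ - (exp μ - 1)⁻¹ := by
  ext μ
  rw [truncExpMean, one_div, exp_neg_div_one_sub_exp_neg]

lemma truncExpEntropy_eq :
    truncExpEntropy = fun μ => 1 - log μ + log (exp μ - 1) - μ - μ * (exp μ - 1)⁻¹ := by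
  ext μ
  rcases eq_or_ne μ 0 with rfl | hμ
  · simp [truncExpEntropy]
  have hsub : 1 - exp (-μ) = (exp μ - 1) / exp μ := by
    rw [exp_neg]; field_simp
  rw [truncExpEntropy, mul_div_assoc, exp_neg_div_one_sub_exp_neg, hsub, div_div_eq_mul_div,
    log_div (mul_ne_zero hμ (exp_pos μ).ne') (exp_sub_one_ne_zero hμ), log_mul hμ (exp_pos μ).ne',
    log_exp]
  ring

lemma hasDerivAt_truncExpMean {x : ℝ} (hx : x ≠ 0) :
    HasDerivAt truncExpMean (exp x / (exp x - 1) ^ 2 - (x ^ 2)⁻¹) x := by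
  rw [truncExpMean_eq]
  exact ((hasDerivAt_inv hx).sub
    (((hasDerivAt_exp x).sub_const 1).inv (exp_sub_one_ne_zero hx))).congr_deriv (by ring)

lemma hasDerivAt_truncExpEntropy {x : ℝ} (hx : x ≠ 0) :
    HasDerivAt truncExpEntropy (x * (exp x / (exp x - 1) ^ 2 - (x ^ 2)⁻¹)) x := by
  have hexp := exp_sub_one_ne_zero hx
  rw [truncExpEntropy_eq]
  have hlog := ((hasDerivAt_exp x).sub_const 1).log hexp
  have hinv := ((hasDerivAt_exp x).sub_const 1).inv hexp
  refine (((((hasDerivAt_log hx).const_sub 1).add hlog).sub (hasDerivAt_id' x)).sub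
    ((hasDerivAt_id' x).mul hinv)).congr_deriv ?_
  simp only [Pi.inv_apply]
  field_simp
  ring

lemma sq_mul_exp_lt_sq_exp_sub_one {x : ℝ} (hx : 0 < x) : x ^ 2 * exp x < (exp x - 1) ^ 2 := by
  set t := exp (x / 2) with ht
  have ht0 : 0 < t := exp_pos _
  have hsinh : x < t - t⁻¹ := by
    have := self_lt_sinh_iff.2 (half_pos hx)
    rw [sinh_eq, exp_neg, ← ht] at this
    linarith
  have hexp : exp x = t ^ 2 := (exp_half_sq x).symm
  have hfactor : exp x - 1 = t * (t - t⁻¹) := by rw [hexp]; field_simp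
  rw [hfactor, hexp, mul_pow, mul_comm]
  gcongr

lemma exp_div_sq_sub_inv_sq_neg {x : ℝ} (hx : 0 < x) : exp x / (exp x - 1) ^ 2 - (x ^ 2)⁻¹ < 0 := by
  have hexp : 0 < exp x - 1 := sub_pos.2 (one_lt_exp_iff.2 hx)
  rw [sub_neg, div_lt_iff₀ (by positivity), inv_mul_eq_div, lt_div_iff₀ (by positivity), mul_comm]
  exact sq_mul_exp_lt_sq_exp_sub_one hx

lemma strictAntiOn_Ioi_of_hasDerivAt_neg {f f' : ℝ → ℝ} {a : ℝ}
    (hf : ∀ x ∈ Ioi a, HasDerivAt f (f' x) x) (hf' : ∀ x ∈ Ioi a, f' x < 0) :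
    StrictAntiOn f (Ioi a) :=
  strictAntiOn_of_hasDerivWithinAt_neg (convex_Ioi a)
    (fun x hx => (hf x hx).continuousAt.continuousWithinAt)
    (by simpa using fun x hx => (hf x hx).hasDerivWithinAt) (by simpa using hf')

lemma truncExpMean_strictAntiOn : StrictAntiOn truncExpMean (Ioi 0) :=
  strictAntiOn_Ioi_of_hasDerivAt_neg (fun _ hx => hasDerivAt_truncExpMean (ne_of_gt hx))
    fun _ hx => exp_div_sq_sub_inv_sq_neg hx

lemma truncExpEntropy_strictAntiOn : StrictAntiOn truncExpEntropy (Ioi 0) :=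
  strictAntiOn_Ioi_of_hasDerivAt_neg (fun _ hx => hasDerivAt_truncExpEntropy (ne_of_gt hx))
    fun _ hx => mul_neg_of_pos_of_neg hx (exp_div_sq_sub_inv_sq_neg hx)

lemma sinh_lt_mul_cosh {x : ℝ} (hx : 0 < x) : sinh x < x * cosh x := by
  have hmono : StrictMonoOn (fun y => y * cosh y - sinh y) (Ici 0) := by
    refine strictMonoOn_of_hasDerivWithinAt_pos (convex_Ici 0) (by fun_prop)
      (fun y _ => (((hasDerivAt_id' y).mul (hasDerivAt_cosh y)).sub
        (hasDerivAt_sinh y)).hasDerivWithinAt) fun y hy => ?_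
    rw [interior_Ici] at hy
    have := mul_pos hy (sinh_pos_iff.2 hy)
    linarith
  simpa using hmono self_mem_Ici hx.le hx

lemma truncExpMean_lt_half {μ : ℝ} (hμ : 0 < μ) : truncExpMean μ < 1 / 2 := by
  set t := exp (μ / 2) with ht
  have ht0 : 0 < t := exp_pos _
  have htanh : t - t⁻¹ < μ / 2 * (t + t⁻¹) := by
    have := sinh_lt_mul_cosh (half_pos hμ)
    rw [sinh_eq, cosh_eq, exp_neg, ← ht] at this
    linarith
  have hexp : exp μ = t ^ 2 := (exp_half_sq μ).symm
  have hexp1 : 0 < t ^ 2 - 1 := by rw [← hexp]; exact sub_pos.2 (one_lt_exp_iff.2 hμ)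
  have hsq : t ^ 2 - 1 < μ / 2 * (t ^ 2 + 1) := by
    have := mul_lt_mul_of_pos_left htanh ht0
    field_simp at this ⊢
    linarith
  rw [truncExpMean_eq]
  beta_reduce
  rw [hexp, inv_eq_one_div, inv_eq_one_div, div_sub_div _ _ hμ.ne' hexp1.ne',
    div_lt_div_iff₀ (by positivity) two_pos]
  linarith

lemma tendsto_truncExpEntropy_nhdsNE_zero : Tendsto truncExpEntropy (𝓝[≠] 0) (𝓝 0) := by
  have hslope : Tendsto (slope exp 0) (𝓝[≠] 0) (𝓝 1) := by
    simpa using hasDerivAt_iff_tendsto_slope.1 (hasDerivAt_exp 0)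
  have hlim : Tendsto (fun μ => 1 + log (slope exp 0 μ) - μ - (slope exp 0 μ)⁻¹) (𝓝[≠] 0)
      (𝓝 (1 + log 1 - 0 - 1⁻¹)) :=
    (((tendsto_const_nhds.add (hslope.log one_ne_zero)).sub
      (tendsto_id.mono_left nhdsWithin_le_nhds)).sub (hslope.inv₀ one_ne_zero))
  rw [log_one, inv_one, add_zero, sub_zero, sub_self] at hlim
  refine hlim.congr' (eventually_nhdsWithin_of_forall fun μ (hμ : μ ≠ 0) => ?_)
  rw [truncExpEntropy_eq, slope_def_field, exp_zero, sub_zero,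
    log_div (exp_sub_one_ne_zero hμ) hμ, inv_div, div_eq_mul_inv]
  ring

lemma StrictAntiOn.strictAntiOn_of_leftInvOn {α β : Type*} [LinearOrder α] [Preorder β]
    {f : β → α} {g : α → β} {s : Set β} {t : Set α} (hg : StrictAntiOn g t) (hf : MapsTo f s t)
    (hgf : LeftInvOn g f s) : StrictAntiOn f s := fun a ha b hb hab =>
  (hg.lt_iff_gt (hf ha) (hf hb)).1 (by rwa [hgf ha, hgf hb])

lemma tendsto_nhdsGT_zero_of_leftInvOn_truncExpMean {f : ℝ → ℝ}
    (hf : MapsTo f (Ioo 0 (1 / 2)) (Ioi 0)) (hmean : LeftInvOn truncExpMean f (Ioo 0 (1 / 2))) :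
    Tendsto f (𝓝[<] (1 / 2)) (𝓝[>] 0) := by
  have hIoo : ∀ᶠ l in 𝓝[<] (1 / 2 : ℝ), l ∈ Ioo 0 (1 / 2) := Ioo_mem_nhdsLT (by norm_num)
  refine tendsto_nhdsWithin_iff.2 ⟨tendsto_order.2 ⟨fun a ha => ?_, fun b hb => ?_⟩,
    hIoo.mono fun l hl => hf hl⟩
  · exact hIoo.mono fun l hl => ha.trans (hf hl)
  · filter_upwards [hIoo, Ioo_mem_nhdsLT (truncExpMean_lt_half hb)] with l hl hlb
    refine (truncExpMean_strictAntiOn.lt_iff_gt hb (hf hl)).1 ?_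
    rw [hmean hl]
    exact hlb.1

lemma exists_probVector_sum_mul_val_eq {n : ℕ} (hn : 1 < n) {β : ℝ} (hβ0 : 0 ≤ β)
    (hβ : β ≤ n - 1) :
    ∃ p : Fin n → ℝ, (∀ k, 0 ≤ p k) ∧ ∑ k, p k = 1 ∧ ∑ k : Fin n, p k * (k.val : ℝ) = β := by
  obtain ⟨m, rfl⟩ : ∃ m, n = m + 1 := ⟨n - 1, by omega⟩
  have hm : (0 : ℝ) < m := by exact_mod_cast Nat.lt_of_succ_lt_succ hn
  push_cast at hβ
  rw [add_sub_cancel_right] at hβ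
  set c := β / m
  have hc0 : 0 ≤ c := div_nonneg hβ0 hm.le
  have hc1 : c ≤ 1 := (div_le_one hm).2 hβ
  refine ⟨Pi.single 0 (1 - c) + Pi.single (Fin.last m) c, ?_, ?_, ?_⟩
  · have h0 : (0 : Fin (m + 1) → ℝ) ≤ Pi.single 0 (1 - c) :=
      Pi.single_nonneg.2 (sub_nonneg.2 hc1)
    have hlast : (0 : Fin (m + 1) → ℝ) ≤ Pi.single (Fin.last m) c := Pi.single_nonneg.2 hc0
    exact add_nonneg h0 hlast
  · simp [Finset.sum_add_distrib]
  · simp [Finset.sum_add_distrib, add_mul, Pi.single_apply, c]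
    field_simp

theorem prob_vector_exists_and_entropy_monotone (n : ℕ) (hn : 2 ≤ n)
    (β : ℝ) (hβ0 : 0 < β) (hβ : β < (n : ℝ) / 2)
    (μf : ℝ → ℝ)
    (hμf : ∀ l ∈ Set.Ioo (0 : ℝ) (1 / 2),
      0 < μf l ∧ 1 / μf l - Real.exp (-μf l) / (1 - Real.exp (-μf l)) = l) :
    (∃ p : Fin n → ℝ, (∀ k, 0 ≤ p k) ∧ (∑ k, p k) = 1 ∧
      (∑ k : Fin n, p k * (k.val : ℝ)) = β) ∧
    StrictMonoOn (fun l =>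
        1 - Real.log (μf l / (1 - Real.exp (-μf l)))
          - μf l * Real.exp (-μf l) / (1 - Real.exp (-μf l)))
      (Set.Ioo (0 : ℝ) (1 / 2)) ∧
    Tendsto (fun l =>
        1 - Real.log (μf l / (1 - Real.exp (-μf l)))
          - μf l * Real.exp (-μf l) / (1 - Real.exp (-μf l)))
      (nhdsWithin (1 / 2) (Set.Iio (1 / 2))) (nhds 0) := by
  have hn' : (2 : ℝ) ≤ n := by exact_mod_cast hn
  have hmaps : MapsTo μf (Ioo 0 (1 / 2)) (Ioi 0) := fun l hl => (hμf l hl).1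
  have hmean : LeftInvOn truncExpMean μf (Ioo 0 (1 / 2)) := fun l hl => (hμf l hl).2
  refine ⟨exists_probVector_sum_mul_val_eq (by omega) hβ0.le (by linarith), ?_, ?_⟩
  · exact truncExpEntropy_strictAntiOn.comp
      (truncExpMean_strictAntiOn.strictAntiOn_of_leftInvOn hmaps hmean) hmaps
  · have hentropy := tendsto_truncExpEntropy_nhdsNE_zero.mono_left
      (nhdsWithin_mono _ fun _ => ne_of_gt)
    exact hentropy.comp (tendsto_nhdsGT_zero_of_leftInvOn_truncExpMean hmaps hmean)
end
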